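/- arXiv:math/0408403 — 2 statements merged into one kernel-verified Lean document; each statement's English description precedes it below -/
import Mathlib

section
/- Let G be a topological group acting continuously on topological spaces E and F, and suppose the action of G on E is principal, i.e. it is free and the map G × E → E × E, (g,e) ↦ (g·e, e), is a homeomorphism onto the fiber product E ×_{E/G} E = {(e₁,e₂) ∈ E × E : q(e₁) = q(e₂)} with the subspace topology. Then for every continuous section s : E/G → E ×_G F of the projection p : E ×_G F → E/G (p ∘ s = id), there exists a unique continuous G-equivariant map ŝ : E → F such that s(q(e)) = [e, ŝ(e)] for all e ∈ E. -/
/-!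
Principality yields a continuous translation function `τ : E ×_{E/G} E → G` with
`τ (e₁, e₂) • e₂ = e₁`. The map `(e, (e', x)) ↦ τ (e, e') • x` is invariant under the diagonal
action on `(e', x)`, so it descends along the open quotient map `E × (E × F) → E × (E ×_G F)`,
restricted to the fiber product `E ×_{E/G} (E ×_G F)`; evaluating it at `(e, s (q e))` gives `ŝ`.
Freeness makes `x ↦ [e, x]` injective, which forces both equivariance and uniqueness.
-/

set_option linter.unusedSectionVars false

variable (G E F : Type) [Group G] [TopologicalSpace G] [IsTopologicalGroup G]
  [TopologicalSpace E] [MulAction G E] [ContinuousSMul G E]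
  [TopologicalSpace F] [MulAction G F] [ContinuousSMul G F]

/-- The orbit space `E/G`, with the quotient topology. -/
abbrev OrbitSpace := Quotient (MulAction.orbitRel G E)

/-- The Borel construction `E ×_G F`: the quotient of `E × F` by the diagonal
`G`-action, with the quotient topology. -/
abbrev BorelConstruction := Quotient (MulAction.orbitRel G (E × F))

/-- The projection `p : E ×_G F → E/G`, `p [e, x] = q e`. -/
def borelProj : BorelConstruction G E F → OrbitSpace G E :=
  Quotient.lift (fun z => Quotient.mk (MulAction.orbitRel G E) z.1) (by
    intro a b hab
    obtain ⟨g, hg⟩ := MulAction.orbitRel_apply.mp hab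
    exact Quotient.sound (MulAction.orbitRel_apply.mpr ⟨g, congrArg Prod.fst hg⟩))

/-- The fiber product `E ×_{E/G} E = {(e₁, e₂) | q e₁ = q e₂}`, with the subspace topology. -/
abbrev FiberProd := {z : E × E // Quotient.mk (MulAction.orbitRel G E) z.1 =
  Quotient.mk (MulAction.orbitRel G E) z.2}

/-- The translation map `G × E → E ×_{E/G} E`, `(g, e) ↦ (g • e, e)`. -/
def translationMap : G × E → FiberProd G E := fun ge =>
  ⟨(ge.1 • ge.2, ge.2), Quotient.sound (MulAction.orbitRel_apply.mpr (MulAction.mem_orbit _ _))⟩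

section BorelPullback

variable {G E F : Type} [Group G] [MulAction G E] [MulAction G F]

theorem mk_smul_eq_mk (g : G) (z : E × F) :
    Quotient.mk (MulAction.orbitRel G (E × F)) (g • z) = Quotient.mk _ z :=
  Quotient.sound (MulAction.mem_orbit z g)

theorem injective_mk_of_free (hfree : ∀ (g : G) (e : E), g • e = e → g = 1) (e : E) :
    Function.Injective fun x : F => Quotient.mk (MulAction.orbitRel G (E × F)) (e, x) := by
  intro x y hxy
  obtain ⟨g, hg⟩ : ∃ g : G, g • (e, y) = (e, x) := Quotient.exact hxy
  obtain ⟨hge, rfl⟩ := Prod.mk.inj hg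
  rw [hfree g e hge, one_smul]

theorem map_smul_of_section_eq_mk (hfree : ∀ (g : G) (e : E), g • e = e → g = 1)
    {s : OrbitSpace G E → BorelConstruction G E F} {t : E → F}
    (ht : ∀ e, s (Quotient.mk _ e) = Quotient.mk _ (e, t e)) (g : G) (e : E) :
    t (g • e) = g • t e :=
  injective_mk_of_free hfree (g • e) <| calc
    Quotient.mk _ (g • e, t (g • e)) = s (Quotient.mk _ (g • e)) := (ht _).symm
    _ = s (Quotient.mk _ e) := congrArg s (Quotient.sound (MulAction.mem_orbit e g))
    _ = Quotient.mk _ (e, t e) := ht e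
    _ = Quotient.mk _ (g • (e, t e)) := (mk_smul_eq_mk g _).symm

def borelPullback : Set (E × BorelConstruction G E F) :=
  {w | borelProj G E F w.2 = Quotient.mk _ w.1}

variable [TopologicalSpace E] [TopologicalSpace F]

def mkBorelPullback :
    C(Prod.map id (Quotient.mk (MulAction.orbitRel G (E × F))) ⁻¹' borelPullback,
      borelPullback (G := G) (E := E) (F := F)) :=
  ⟨_, (continuous_id.prodMap continuous_quot_mk).restrictPreimage⟩

theorem isQuotientMap_mkBorelPullback [ContinuousConstSMul G E] [ContinuousConstSMul G F] :
    Topology.IsQuotientMap (mkBorelPullback (G := G) (E := E) (F := F)) :=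
  ((IsOpenQuotientMap.id.prodMap MulAction.isOpenQuotientMap_quotientMk).restrictPreimage
    _).isQuotientMap

end BorelPullback

section Principal

variable {G E F : Type} [Group G] [TopologicalSpace G] [TopologicalSpace E] [MulAction G E]
  [MulAction G F]
  (hprinc : IsHomeomorph (translationMap G E))

noncomputable def translationFun (z : FiberProd G E) : G :=
  (hprinc.homeomorph.symm z).1

theorem continuous_translationFun : Continuous (translationFun hprinc) :=
  continuous_fst.comp hprinc.homeomorph.symm.continuous

theorem translationFun_translationMap (p : G × E) :
    translationFun hprinc (translationMap G E p) = p.1 :=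
  congrArg Prod.fst (hprinc.homeomorph.symm_apply_apply p)

theorem translationFun_smul (z : FiberProd G E) : translationFun hprinc z • z.1.2 = z.1.1 := by
  obtain ⟨p, rfl⟩ := hprinc.surjective z
  rw [translationFun_translationMap]
  rfl

theorem translationFun_eq_of_smul_eq {z : FiberProd G E} {g : G} (hg : g • z.1.2 = z.1.1) :
    translationFun hprinc z = g := by
  have hz : translationMap G E (g, z.1.2) = z := Subtype.ext (Prod.ext hg rfl)
  rw [← hz, translationFun_translationMap]

theorem translationFun_smul_right {e₁ e₂ : E} (g : G)
    (h : Quotient.mk _ e₁ = Quotient.mk _ e₂) (hg : Quotient.mk _ e₁ = Quotient.mk _ (g • e₂)) :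
    translationFun hprinc ⟨(e₁, g • e₂), hg⟩ = translationFun hprinc ⟨(e₁, e₂), h⟩ * g⁻¹ :=
  translationFun_eq_of_smul_eq hprinc <| by
    rw [mul_smul, inv_smul_smul]
    exact translationFun_smul hprinc ⟨(e₁, e₂), h⟩

noncomputable def untwist (e : E) (z : E × F)
    (h : Quotient.mk (MulAction.orbitRel G E) e = Quotient.mk _ z.1) : F :=
  translationFun hprinc ⟨(e, z.1), h⟩ • z.2

theorem untwist_smul (e : E) (z : E × F) (g : G) (h : Quotient.mk _ e = Quotient.mk _ z.1)
    (hg : Quotient.mk _ e = Quotient.mk _ (g • z).1) :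
    untwist hprinc e (g • z) hg = untwist hprinc e z h := by
  change translationFun hprinc ⟨(e, g • z.1), hg⟩ • g • z.2 = _
  rw [translationFun_smul_right hprinc g h hg, mul_smul, inv_smul_smul]
  rfl

theorem mk_untwist (e : E) (z : E × F) (h : Quotient.mk _ e = Quotient.mk _ z.1) :
    Quotient.mk (MulAction.orbitRel G (E × F)) (e, untwist hprinc e z h) = Quotient.mk _ z := by
  rw [← mk_smul_eq_mk (translationFun hprinc ⟨(e, z.1), h⟩) z]
  congr 1
  exact Prod.ext (translationFun_smul hprinc ⟨(e, z.1), h⟩).symm rfl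

variable [TopologicalSpace F]

theorem factorsThrough_untwist_mkBorelPullback :
    Function.FactorsThrough (fun w : Prod.map id (Quotient.mk (MulAction.orbitRel G (E × F))) ⁻¹'
        borelPullback => untwist hprinc w.1.1 w.1.2 w.2.symm) mkBorelPullback := by
  rintro ⟨⟨e, z⟩, hz⟩ ⟨⟨e', z'⟩, hz'⟩ h
  obtain ⟨rfl, hzz'⟩ := Prod.mk.inj (congrArg Subtype.val h :
    (e, Quotient.mk _ z) = (e', Quotient.mk _ z'))
  obtain ⟨g, rfl⟩ : ∃ g : G, g • z' = z := Quotient.exact hzz'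
  exact untwist_smul hprinc e z' g _ _

variable [ContinuousSMul G F]

theorem continuous_untwist :
    Continuous fun w : Prod.map id (Quotient.mk (MulAction.orbitRel G (E × F))) ⁻¹'
        borelPullback => untwist hprinc w.1.1 w.1.2 w.2.symm :=
  ((continuous_translationFun hprinc).comp (Continuous.subtype_mk (by fun_prop) _)).smul
    (by fun_prop)

variable [ContinuousConstSMul G E]

noncomputable def untwistBorel : C(borelPullback (G := G) (E := E) (F := F), F) :=
  isQuotientMap_mkBorelPullback.lift ⟨_, continuous_untwist hprinc⟩
    (factorsThrough_untwist_mkBorelPullback hprinc)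

theorem mk_untwistBorel (w : borelPullback (G := G) (E := E) (F := F)) :
    Quotient.mk (MulAction.orbitRel G (E × F)) (w.1.1, untwistBorel hprinc w) = w.1.2 := by
  obtain ⟨v, rfl⟩ := isQuotientMap_mkBorelPullback.surjective w
  have hv : untwistBorel hprinc (mkBorelPullback v) = untwist hprinc v.1.1 v.1.2 v.2.symm :=
    DFunLike.congr_fun (isQuotientMap_mkBorelPullback.lift_comp ⟨_, continuous_untwist hprinc⟩
      (factorsThrough_untwist_mkBorelPullback hprinc)) v
  rw [hv]
  exact mk_untwist hprinc _ _ _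

theorem exists_continuous_section_eq_mk (hprinc : IsHomeomorph (translationMap G E))
    (s : C(OrbitSpace G E, BorelConstruction G E F))
    (hsec : ∀ z : OrbitSpace G E, borelProj G E F (s z) = z) :
    ∃ sHat : C(E, F), ∀ e : E, s (Quotient.mk (MulAction.orbitRel G E) e) =
      Quotient.mk (MulAction.orbitRel G (E × F)) (e, sHat e) :=
  ⟨(untwistBorel hprinc).comp ⟨fun e => ⟨(e, s (Quotient.mk _ e)), hsec _⟩,
      (continuous_id.prodMk (s.continuous.comp continuous_quot_mk)).subtype_mk _⟩,
    fun e => (mk_untwistBorel hprinc ⟨(e, s (Quotient.mk _ e)), hsec _⟩).symm⟩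

end Principal

/-- If the action of `G` on `E` is principal (free, and the translation map
is a homeomorphism onto the fiber product), then every continuous section `s` of the projection
`p : E ×_G F → E/G` comes from a unique continuous `G`-equivariant map `ŝ : E → F`
via `s (q e) = [e, ŝ e]`. -/
theorem equivariant_map_of_section
    (hfree : ∀ (g : G) (e : E), g • e = e → g = 1)
    (hprinc : IsHomeomorph (translationMap G E))
    (s : C(OrbitSpace G E, BorelConstruction G E F))
    (hsec : ∀ z : OrbitSpace G E, borelProj G E F (s z) = z) :
    ∃! sHat : C(E, F),
      (∀ (g : G) (e : E), sHat (g • e) = g • sHat e) ∧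
      (∀ e : E, s (Quotient.mk (MulAction.orbitRel G E) e) =
        Quotient.mk (MulAction.orbitRel G (E × F)) (e, sHat e)) := by
  obtain ⟨sHat, hsHat⟩ := exists_continuous_section_eq_mk hprinc s hsec
  refine ⟨sHat, ⟨map_smul_of_section_eq_mk hfree hsHat, hsHat⟩, fun t ht => ?_⟩
  ext e
  exact injective_mk_of_free hfree e ((ht.2 e).symm.trans (hsHat e))
end

section
/- Let F be a Hausdorff topological space, h : F → F a homeomorphism, and x ∈ F a periodic point of least period n ≥ 1, i.e. hⁿ(x) = x and the points x, h(x), …, h^{n−1}(x) are pairwise distinct. Let S ⊆ T_h be the image under the quotient map F × ℝ → T_h of the set {x, h(x), …, h^{n−1}(x)} × ℝ, with the subspace topology. Then the restriction p|_S : S → ℝ/ℤ of the mapping-torus projection is a covering map each of whose fibers has exactly n elements (an n-fold covering of the circle). -/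
variable {F : Type} [TopologicalSpace F]

/-- The group of self-homeomorphisms of `F`, with `(a * b) x = a (b x)`. -/
instance : Group (F ≃ₜ F) where
  mul a b := b.trans a
  one := Homeomorph.refl F
  inv := Homeomorph.symm
  mul_assoc _ _ _ := rfl
  one_mul _ := rfl
  mul_one _ := rfl
  inv_mul_cancel a := Homeomorph.ext fun x => a.symm_apply_apply x

/-- The `ℤ`-action on `F × ℝ`: `n • (x, t) = (hⁿ x, t + n)`. -/
def torusAct (h : F ≃ₜ F) (n : ℤ) (p : F × ℝ) : F × ℝ :=
  ((h ^ n) p.1, p.2 + n)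

lemma torusAct_zero (h : F ≃ₜ F) (p : F × ℝ) : torusAct h 0 p = p := by
  unfold torusAct
  rw [zpow_zero]
  exact Prod.ext rfl (by push_cast; ring)

lemma torusAct_add (h : F ≃ₜ F) (m n : ℤ) (p : F × ℝ) :
    torusAct h (m + n) p = torusAct h m (torusAct h n p) := by
  unfold torusAct
  rw [zpow_add]
  exact Prod.ext rfl (by push_cast; ring)

/-- The equivalence relation on `F × ℝ` generated by the `ℤ`-action. -/
def torusSetoid (h : F ≃ₜ F) : Setoid (F × ℝ) where
  r p q := ∃ n : ℤ, torusAct h n p = q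
  iseqv := by
    constructor
    · exact fun p => ⟨0, torusAct_zero h p⟩
    · rintro p q ⟨n, rfl⟩
      exact ⟨-n, by rw [← torusAct_add, neg_add_cancel, torusAct_zero]⟩
    · rintro p q r ⟨m, rfl⟩ ⟨n, rfl⟩
      exact ⟨n + m, by rw [torusAct_add]⟩

/-- The mapping torus of `h : F ≃ₜ F`, as the quotient of `F × ℝ` by the `ℤ`-action. -/
def MappingTorus (h : F ≃ₜ F) : Type := Quotient (torusSetoid h)

instance (h : F ≃ₜ F) : TopologicalSpace (MappingTorus h) :=
  instTopologicalSpaceQuotient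

/-- The projection `p : T_h → ℝ/ℤ` induced by `(x, t) ↦ t`. -/
noncomputable def torusProj (h : F ≃ₜ F) : MappingTorus h → AddCircle (1 : ℝ) :=
  Quotient.lift (fun p : F × ℝ => ((p.2 : ℝ) : AddCircle (1 : ℝ))) (by
    rintro a b ⟨n, rfl⟩
    show (a.2 : AddCircle (1 : ℝ)) = ((a.2 + (n : ℝ) : ℝ) : AddCircle (1 : ℝ))
    refine (QuotientAddGroup.eq).mpr ?_
    refine AddSubgroup.mem_zmultiples_iff.mpr ⟨n, ?_⟩
    rw [zsmul_eq_mul, mul_one, neg_add_cancel_left])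

/-!
Let `n` be the period of `x`. The loop `t ↦ [(x, n t)]` from `ℝ/ℤ` into the mapping torus is a
homeomorphism onto `S`: it is injective because `hᵐ x = x` forces `n ∣ m`, and it is open because,
`F` being T1, the rest of the orbit of `x` is closed and can be cut away. Through this
homeomorphism `p|_S` becomes multiplication by `n` on `ℝ/ℤ`, an `n`-fold covering.
-/

open Set Function

lemma Function.minimalPeriod_eq_of_injOn {α : Type*} {f : α → α} {x : α} {n : ℕ} (hn : 0 < n)
    (hper : IsPeriodicPt f n x) (hinj : InjOn (f^[·] x) (Iio n)) : minimalPeriod f x = n := by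
  have hpos := hper.minimalPeriod_pos hn
  have hle := Nat.le_of_dvd hn hper.minimalPeriod_dvd
  by_contra hne
  have := hinj (lt_of_le_of_ne hle hne) (mem_Iio.mpr hn) (by simp)
  omega

namespace Homeomorph

def toPermHom : (F ≃ₜ F) →* Equiv.Perm F := ⟨⟨Homeomorph.toEquiv, rfl⟩, fun _ _ => rfl⟩

lemma coe_pow (h : F ≃ₜ F) (k : ℕ) : ⇑(h ^ k) = h^[k] :=
  congrArg DFunLike.coe (map_pow toPermHom h k)

lemma zpow_apply_eq_self_iff (h : F ≃ₜ F) (x : F) (m : ℤ) :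
    (h ^ m) x = x ↔ (minimalPeriod h x : ℤ) ∣ m := by
  rw [show ⇑(h ^ m) = ⇑(h.toEquiv ^ m) from congrArg DFunLike.coe (map_zpow toPermHom h m)]
  exact MulAction.zpow_smul_eq_iff_minimalPeriod_dvd (a := h.toEquiv)

lemma exists_iterate_eq_zpow_apply (h : F ≃ₜ F) {x : F} (hx : 0 < minimalPeriod h x) (m : ℤ) :
    ∃ i < minimalPeriod h x, h^[i] x = (h ^ m) x := by
  have hlt := Int.emod_lt_of_pos m (Int.natCast_pos.mpr hx)
  have hnonneg := Int.emod_nonneg m (Int.natCast_ne_zero.mpr hx.ne')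
  refine ⟨(m % (minimalPeriod h x : ℤ)).toNat, by omega, ?_⟩
  have hq : (h ^ ((minimalPeriod h x : ℤ) * (m / minimalPeriod h x))) x = x :=
    (zpow_apply_eq_self_iff h x _).mpr (dvd_mul_right _ _)
  rw [← coe_pow, ← zpow_natCast, Int.toNat_of_nonneg hnonneg]
  conv_rhs => rw [← Int.emod_add_mul_ediv m (minimalPeriod h x), zpow_add, mul_apply, hq]

end Homeomorph

namespace AddCircle

lemma toAddCircle_mem_ker_nsmul (n : ℕ) [NeZero n] (j : ZMod n) :
    ZMod.toAddCircle j ∈ (nsmulAddMonoidHom (α := UnitAddCircle) n).ker := by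
  rw [AddMonoidHom.mem_ker, nsmulAddMonoidHom_apply, ← map_nsmul, nsmul_eq_mul,
    ZMod.natCast_self, zero_mul, map_zero]

lemma card_ker_nsmul (n : ℕ) [NeZero n] :
    Nat.card (nsmulAddMonoidHom (α := UnitAddCircle) n).ker = n := by
  have hsurj : Surjective (codRestrict _ _ (toAddCircle_mem_ker_nsmul n)) := by
    rintro ⟨u, hu⟩
    obtain ⟨t, rfl⟩ := QuotientAddGroup.mk_surjective u
    obtain ⟨k, hk⟩ := (AddCircle.coe_eq_zero_iff (1 : ℝ)).mp
      (by rwa [AddCircle.coe_nsmul] : ((n • t : ℝ) : UnitAddCircle) = 0)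
    refine ⟨k, Subtype.ext ?_⟩
    rw [val_codRestrict_apply, ZMod.toAddCircle_intCast]
    congr 1
    rw [zsmul_one, nsmul_eq_mul] at hk
    field_simp [NeZero.ne (n : ℝ)]
    linarith
  exact (Nat.card_congr (Equiv.ofBijective _
    ⟨(ZMod.toAddCircle_injective n).codRestrict _, hsurj⟩)).symm.trans (Nat.card_zmod n)

lemma card_nsmul_preimage_singleton (n : ℕ) [NeZero n] (b : UnitAddCircle) :
    Nat.card ((n • ·) ⁻¹' {b} : Set UnitAddCircle) = n := by
  obtain ⟨t, rfl⟩ := QuotientAddGroup.mk_surjective b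
  have hfib : ((t / n : ℝ) : UnitAddCircle) ∈ (n • ·) ⁻¹' {(t : UnitAddCircle)} := by
    simp [← AddCircle.coe_nsmul, nsmul_eq_mul, mul_div_cancel₀ _ (NeZero.ne (n : ℝ))]
  rw [Nat.card_congr ((isAddQuotientCoveringMap_nsmul_of_ne_zero (1 : ℝ) n).fiberEquivAddGroup
    ⟨_, hfib⟩), card_ker_nsmul]

end AddCircle

namespace MappingTorus

open Homeomorph

variable (h : F ≃ₜ F)

lemma continuous_torusAct (m : ℤ) : Continuous (torusAct h m) :=
  ((h ^ m).continuous.comp continuous_fst).prodMk (continuous_snd.add continuous_const)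

lemma isOpenMap_mk : IsOpenMap (Quotient.mk (torusSetoid h)) := by
  intro U hU
  have hsat : Quotient.mk (torusSetoid h) ⁻¹' (Quotient.mk (torusSetoid h) '' U)
      = ⋃ m : ℤ, torusAct h m ⁻¹' U := by
    ext p
    simp only [mem_preimage, mem_image, mem_iUnion]
    constructor
    · rintro ⟨q, hq, hqp⟩
      obtain ⟨m, rfl⟩ := Quotient.exact hqp
      exact ⟨-m, by rwa [← torusAct_add, neg_add_cancel, torusAct_zero]⟩
    · rintro ⟨m, hm⟩
      exact ⟨_, hm, Quotient.sound ⟨-m, by rw [← torusAct_add, neg_add_cancel, torusAct_zero]⟩⟩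
  rw [isOpen_coinduced (f := Quotient.mk (torusSetoid h)), hsat]
  exact isOpen_iUnion fun m => hU.preimage (continuous_torusAct h m)

lemma fst_mem_of_mk_mem_image {A : Set F} (hA : ∀ m : ℤ, MapsTo (h ^ m) A A) {p : F × ℝ}
    (hp : Quotient.mk (torusSetoid h) p ∈ Quotient.mk (torusSetoid h) '' (Prod.fst ⁻¹' A)) :
    p.1 ∈ A := by
  obtain ⟨q, hq, hqp⟩ := hp
  obtain ⟨m, rfl⟩ := Quotient.exact hqp
  exact hA m hq

section Orbit

variable (x : F)

def orbitSuspension : Set (MappingTorus h) :=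
  Quotient.mk (torusSetoid h) '' (Prod.fst ⁻¹' ((h^[·] x) '' Iio (minimalPeriod h x)))

lemma mapsTo_zpow_orbit (hx : 0 < minimalPeriod h x) (m : ℤ) :
    MapsTo (h ^ m) ((h^[·] x) '' Iio (minimalPeriod h x))
      ((h^[·] x) '' Iio (minimalPeriod h x)) := by
  rintro _ ⟨i, -, rfl⟩
  change (h ^ m) (h^[i] x) ∈ _
  rw [← coe_pow, ← mul_apply, ← zpow_natCast, ← zpow_add]
  exact exists_iterate_eq_zpow_apply h hx _

lemma mk_add_minimalPeriod (t : ℝ) :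
    Quotient.mk (torusSetoid h) (x, t + minimalPeriod h x) = Quotient.mk (torusSetoid h) (x, t) :=
  Quotient.sound ⟨-minimalPeriod h x, Prod.ext
    ((zpow_apply_eq_self_iff h x _).mpr (dvd_neg.mpr dvd_rfl))
    (show t + _ + ((-(minimalPeriod h x : ℤ) : ℤ) : ℝ) = t by push_cast; ring)⟩

noncomputable def orbitParam : UnitAddCircle → MappingTorus h :=
  Periodic.lift (f := fun t : ℝ => Quotient.mk (torusSetoid h) (x, minimalPeriod h x * t))
    fun t => by simpa [mul_add] using mk_add_minimalPeriod h x _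

lemma orbitParam_coe (t : ℝ) :
    orbitParam h x t = Quotient.mk (torusSetoid h) (x, minimalPeriod h x * t) := rfl

lemma torusProj_orbitParam (z : UnitAddCircle) :
    torusProj h (orbitParam h x z) = minimalPeriod h x • z := by
  induction z using QuotientAddGroup.induction_on with
  | H t => rw [← AddCircle.coe_nsmul, nsmul_eq_mul]; rfl

lemma continuous_orbitParam : Continuous (orbitParam h x) :=
  Continuous.quotient_liftOn' (continuous_quotient_mk'.comp
    (continuous_const.prodMk (continuous_const_mul _))) _

variable {x}

lemma orbitParam_injective (hx : 0 < minimalPeriod h x) : Injective (orbitParam h x) := by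
  intro z w hzw
  induction z using QuotientAddGroup.induction_on with | H s =>
  induction w using QuotientAddGroup.induction_on with | H t =>
  obtain ⟨m, hm⟩ := Quotient.exact hzw
  obtain ⟨k, rfl⟩ := (zpow_apply_eq_self_iff h x m).mp (congrArg Prod.fst hm)
  have hst : minimalPeriod h x * s + (minimalPeriod h x * k : ℤ) = minimalPeriod h x * t :=
    congrArg Prod.snd hm
  refine QuotientAddGroup.eq.mpr (AddSubgroup.mem_zmultiples_iff.mpr ⟨k, ?_⟩)
  have hn : (minimalPeriod h x : ℝ) ≠ 0 := Nat.cast_ne_zero.mpr hx.ne'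
  push_cast at hst
  rw [zsmul_one]
  apply mul_left_cancel₀ hn
  linear_combination hst

lemma orbitParam_mem (hx : 0 < minimalPeriod h x) (z : UnitAddCircle) :
    orbitParam h x z ∈ orbitSuspension h x := by
  induction z using QuotientAddGroup.induction_on with
  | H t => exact ⟨_, ⟨0, hx, rfl⟩, rfl⟩

lemma orbitSuspension_subset_range (hx : 0 < minimalPeriod h x) :
    orbitSuspension h x ⊆ range (orbitParam h x) := by
  rintro _ ⟨⟨_, t⟩, ⟨i, -, rfl⟩, rfl⟩
  refine ⟨((t - i) / minimalPeriod h x : ℝ), Quotient.sound ⟨i, Prod.ext ?_ ?_⟩⟩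
  · exact congrFun (coe_pow h i) x
  · change _ * ((t - i) / _) + ((i : ℤ) : ℝ) = t
    field_simp
    push_cast
    ring

section T1

variable [T1Space F]

lemma isOpenMap_codRestrict_orbitParam (hx : 0 < minimalPeriod h x) :
    IsOpenMap (codRestrict (orbitParam h x) _ (orbitParam_mem h hx)) := by
  intro V hV
  set A := (h^[·] x) '' Iio (minimalPeriod h x)
  set W := (fun t : ℝ => ((t / minimalPeriod h x : ℝ) : UnitAddCircle)) ⁻¹' V
  have hO : IsOpen (A \ {x})ᶜ := (((finite_Iio _).image _).sdiff).isClosed.isOpen_compl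
  have hW : IsOpen W :=
    hV.preimage ((AddCircle.continuous_mk' 1).comp (continuous_id.div_const _))
  suffices hV : codRestrict (orbitParam h x) _ (orbitParam_mem h hx) '' V
      = Subtype.val ⁻¹' (Quotient.mk (torusSetoid h) '' ((A \ {x})ᶜ ×ˢ W)) from
    hV ▸ (isOpenMap_mk h _ (hO.prod hW)).preimage continuous_subtype_val
  ext ⟨w, hw⟩
  simp only [mem_image, Subtype.ext_iff, val_codRestrict_apply]
  constructor
  · rintro ⟨z, hz, rfl⟩
    induction z using QuotientAddGroup.induction_on with | H s =>
    refine ⟨(x, minimalPeriod h x * s), ⟨fun hx' => hx'.2 rfl, ?_⟩, rfl⟩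
    simpa [W, mul_div_cancel_left₀ s (Nat.cast_ne_zero.mpr hx.ne')] using hz
  · rintro ⟨⟨y, s⟩, ⟨hyA, hsW⟩, rfl⟩
    obtain rfl : y = x := by
      by_contra hyx
      exact hyA ⟨fst_mem_of_mk_mem_image h (mapsTo_zpow_orbit h x hx) hw, hyx⟩
    refine ⟨_, hsW, ?_⟩
    rw [orbitParam_coe, mul_div_cancel₀ s (Nat.cast_ne_zero.mpr hx.ne')]

noncomputable def orbitHomeomorph (hx : 0 < minimalPeriod h x) :
    UnitAddCircle ≃ₜ orbitSuspension h x :=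
  Equiv.toHomeomorphOfContinuousOpen
    (Equiv.ofBijective _ ⟨(orbitParam_injective h hx).codRestrict _, fun ⟨_, hw⟩ =>
      let ⟨z, hz⟩ := orbitSuspension_subset_range h hx hw; ⟨z, Subtype.ext hz⟩⟩)
    ((continuous_orbitParam h x).codRestrict _)
    (isOpenMap_codRestrict_orbitParam h hx)

lemma torusProj_orbitSuspension_eq (hx : 0 < minimalPeriod h x) :
    (fun w : orbitSuspension h x => torusProj h w) =
      (minimalPeriod h x • ·) ∘ (orbitHomeomorph h hx).symm := by
  funext w
  conv_lhs => rw [← (orbitHomeomorph h hx).apply_symm_apply w]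
  exact torusProj_orbitParam h x _

lemma isCoveringMap_torusProj_orbitSuspension (hx : 0 < minimalPeriod h x) :
    IsCoveringMap fun w : orbitSuspension h x => torusProj h w := by
  have : NeZero (minimalPeriod h x) := ⟨hx.ne'⟩
  rw [torusProj_orbitSuspension_eq h hx]
  exact (AddCircle.isAddQuotientCoveringMap_nsmul_of_ne_zero (1 : ℝ) _).isCoveringMap
    |>.comp_homeomorph _

lemma card_torusProj_orbitSuspension_preimage (hx : 0 < minimalPeriod h x)
    (b : UnitAddCircle) :
    Nat.card ((fun w : orbitSuspension h x => torusProj h w) ⁻¹' {b}) = minimalPeriod h x := by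
  have : NeZero (minimalPeriod h x) := ⟨hx.ne'⟩
  rw [torusProj_orbitSuspension_eq h hx, preimage_comp, Homeomorph.preimage_symm,
    Nat.card_image_of_injective (orbitHomeomorph h hx).injective,
    AddCircle.card_nsmul_preimage_singleton]

end T1

end Orbit

end MappingTorus

/-- Let `F` be Hausdorff, `h : F ≃ₜ F` a homeomorphism and `x` a periodic
point of least period `n ≥ 1`.  Let `S ⊆ T_h` be the image in the mapping torus of
`{x, h x, …, h^[n-1] x} × ℝ`.  Then the restriction of the mapping-torus projection to `S`
is a covering map of the circle each of whose fibers has exactly `n` elements. -/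
theorem orbit_gives_n_fold_covering [T2Space F] (h : F ≃ₜ F) (x : F) (n : ℕ)
    (hn : 1 ≤ n) (hper : (⇑h)^[n] x = x)
    (hleast : ∀ i j : ℕ, i < n → j < n → (⇑h)^[i] x = (⇑h)^[j] x → i = j) :
    IsCoveringMap
      (fun z : {z : MappingTorus h //
          z ∈ Quotient.mk (torusSetoid h) ''
            {p : F × ℝ | ∃ i : ℕ, i < n ∧ (⇑h)^[i] x = p.1}} =>
        torusProj h z.1) ∧
    ∀ b : AddCircle (1 : ℝ),
      Nat.card
        ((fun z : {z : MappingTorus h //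
            z ∈ Quotient.mk (torusSetoid h) ''
              {p : F × ℝ | ∃ i : ℕ, i < n ∧ (⇑h)^[i] x = p.1}} =>
          torusProj h z.1) ⁻¹' {b}) = n := by
  obtain rfl : minimalPeriod h x = n :=
    minimalPeriod_eq_of_injOn hn hper fun i hi j hj => hleast i j hi hj
  exact ⟨MappingTorus.isCoveringMap_torusProj_orbitSuspension h hn,
    MappingTorus.card_torusProj_orbitSuspension_preimage h hn⟩
end
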